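/- arXiv:1405.0648 — 4 statements merged into one kernel-verified Lean document; each statement's English description precedes it below -/
import Mathlib

section
/- If R is left Noetherian, then a left R-module is weak injective if and only if it is injective. -/
open CategoryTheory Opposite

noncomputable section

variable (R : Type) [Ring R]

/-- Vanishing of `Ext^i_R(N, M)` for left `R`-modules. -/
def ExtVanishes (N M : ModuleCat.{0} R) (i : ℕ) : Prop :=
  Subsingleton (((Ext ℤ (ModuleCat.{0} R) i).obj (op N)).obj M)

/-- A left `R`-module `N` is super finitely presented if it admits a resolution
`⋯ → F₁ → F₀ → N → 0` by finitely generated projective modules. -/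
def IsSuperFinitelyPresented (N : ModuleCat.{0} R) : Prop :=
  ∃ (F : ℕ → ModuleCat.{0} R) (d : ∀ n, F (n + 1) ⟶ F n) (ε : F 0 ⟶ N),
    (∀ n, Module.Finite R (F n)) ∧ (∀ n, Module.Projective R (F n)) ∧
    Function.Surjective ε ∧ Function.Exact (d 0) ε ∧
    ∀ n, Function.Exact (d (n + 1)) (d n)

/-- `M` is weak injective if `Ext¹_R(N, M) = 0` for every super finitely presented `N`. -/
def IsWeakInjective (M : ModuleCat.{0} R) : Prop :=
  ∀ N : ModuleCat.{0} R, IsSuperFinitelyPresented R N → ExtVanishes R N M 1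

/-!
Injective modules have vanishing `Ext¹` against every module. Conversely, over a left Noetherian
ring every submodule of a finitely generated module is finitely generated, so covering kernels
by finite free modules again and again resolves `R ⧸ I` by finitely generated free modules,
starting with `R → R ⧸ I`. On this resolution, `Ext¹(R ⧸ I, M) = 0` says precisely that every
map `I → M` extends to `R`, and Baer's criterion makes `M` injective.
-/

variable {R}

namespace CategoryTheory.ProjectiveResolution

def ofExact {N : ModuleCat.{0} R} (F : ℕ → ModuleCat.{0} R) (d : ∀ n, F (n + 1) ⟶ F n)
    (ε : F 0 ⟶ N) (hproj : ∀ n, Module.Projective R (F n)) (hε : Function.Surjective ε)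
    (h₀ : Function.Exact (d 0) ε) (hd : ∀ n, Function.Exact (d (n + 1)) (d n)) :
    ProjectiveResolution N where
  complex := ChainComplex.of F d fun n =>
    ModuleCat.hom_ext (LinearMap.ext (hd n).apply_apply_eq_zero)
  projective n := (IsProjective.iff_projective (F n)).mp (hproj n)
  π := (ChainComplex.toSingle₀Equiv _ _).symm ⟨ε, by
    simpa only [ChainComplex.of_d] using
      ModuleCat.hom_ext (LinearMap.ext h₀.apply_apply_eq_zero)⟩
  quasiIso := ⟨fun n => by
    cases n with
    | zero =>
      rw [ChainComplex.quasiIsoAt₀_iff, ShortComplex.quasiIso_iff_of_zeros' _ rfl rfl rfl,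
        ShortComplex.ShortExact.moduleCat_exact_iff_function_exact]
      exact ⟨h₀, (ModuleCat.epi_iff_surjective ε).mpr hε⟩
    | succ n =>
      rw [quasiIsoAt_iff_exactAt' _ _ (ChainComplex.exactAt_succ_single_obj _ _),
        HomologicalComplex.exactAt_iff' _ (n + 1 + 1) (n + 1) n (by simp) (by simp),
        ShortComplex.ShortExact.moduleCat_exact_iff_function_exact]
      simp only [HomologicalComplex.sc', HomologicalComplex.shortComplexFunctor',
        ChainComplex.of_d]
      exact hd n⟩

end CategoryTheory.ProjectiveResolution

lemma extVanishes_one_iff {N : ModuleCat.{0} R} (M : ModuleCat.{0} R)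
    (P : ProjectiveResolution N) :
    ExtVanishes R N M 1 ↔ ∀ φ : P.complex.X 1 ⟶ M, P.complex.d 2 1 ≫ φ = 0 →
      ∃ ψ : P.complex.X 0 ⟶ M, P.complex.d 1 0 ≫ ψ = φ := by
  rw [ExtVanishes, ← ModuleCat.isZero_iff_subsingleton, (P.isoExt (R := ℤ) 1 M).isZero_iff,
    ← HomologicalComplex.exactAt_iff_isZero_homology,
    HomologicalComplex.exactAt_iff' _ 0 1 2 (by simp) (by simp), ShortComplex.moduleCat_exact_iff]
  rfl

lemma extVanishes_one_of_injective (N : ModuleCat.{0} R) {M : ModuleCat.{0} R}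
    [Module.Injective R M] : ExtVanishes R N M 1 := by
  have : Injective M := Module.injective_object_of_injective_module R M
  let P := ProjectiveResolution.of N
  have hP : (P.complex.sc' 2 1 0).Exact :=
    (HomologicalComplex.exactAt_iff' _ 2 1 0 (by simp) (by simp)).mp (P.complex_exactAt_succ 0)
  rw [extVanishes_one_iff M P]
  intro φ hφ
  exact ⟨hP.descToInjective φ hφ, hP.comp_descToInjective φ hφ⟩

lemma exists_extension_of_extVanishes_one {N M : ModuleCat.{0} R} (F : ℕ → ModuleCat.{0} R)
    (d : ∀ n, F (n + 1) ⟶ F n) (ε : F 0 ⟶ N) (hproj : ∀ n, Module.Projective R (F n))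
    (hε : Function.Surjective ε) (h₀ : Function.Exact (d 0) ε)
    (hd : ∀ n, Function.Exact (d (n + 1)) (d n)) (hN : ExtVanishes R N M 1)
    {K : Submodule R (F 0)} (hK : LinearMap.range (d 0).hom = K) (g : K →ₗ[R] M) :
    ∃ ψ : F 0 →ₗ[R] M, ∀ (x : F 0) (hx : x ∈ K), ψ x = g ⟨x, hx⟩ := by
  subst hK
  let P := ProjectiveResolution.ofExact F d ε hproj hε h₀ hd
  let φ : F 1 ⟶ M := ModuleCat.ofHom (g ∘ₗ (d 0).hom.rangeRestrict)
  have hφ : d 1 ≫ φ = 0 := by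
    ext y
    have : (d 0).hom.rangeRestrict (d 1 y) = 0 := Subtype.ext ((hd 0).apply_apply_eq_zero y)
    simp [φ, this]
  obtain ⟨ψ, hψ⟩ := (extVanishes_one_iff M P).mp hN φ hφ
  refine ⟨ψ.hom, ?_⟩
  rintro _ ⟨y, rfl⟩
  exact congr($hψ y)

namespace Submodule.FG

variable {F : Type*} [AddCommGroup F] [Module R F] {K : Submodule R F}

def finCoverRank (hK : K.FG) : ℕ :=
  ((Submodule.fg_iff_exists_fin_linearMap R F).mp hK).choose

def finCover (hK : K.FG) : (Fin hK.finCoverRank → R) →ₗ[R] F :=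
  ((Submodule.fg_iff_exists_fin_linearMap R F).mp hK).choose_spec.choose

lemma range_finCover (hK : K.FG) : LinearMap.range hK.finCover = K :=
  ((Submodule.fg_iff_exists_fin_linearMap R F).mp hK).choose_spec.choose_spec

end Submodule.FG

section Syzygies

variable [IsNoetherianRing R] (F₀ : ModuleCat.{0} R) {K₀ : Submodule R F₀} (hK₀ : K₀.FG)

/-- Stage `n` is `Fₙ` with the submodule of `Fₙ` that `Fₙ₊₁` has to cover. -/
def syzygyStage : ℕ → Σ F : ModuleCat.{0} R, {K : Submodule R F // K.FG}
  | 0 => ⟨F₀, K₀, hK₀⟩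
  | n + 1 =>
    let hK := (syzygyStage n).2.2
    ⟨ModuleCat.of R (Fin hK.finCoverRank → R), LinearMap.ker hK.finCover,
      IsNoetherian.noetherian _⟩

def syzygyTerm (n : ℕ) : ModuleCat.{0} R := (syzygyStage F₀ hK₀ n).1

def syzygyD (n : ℕ) : syzygyTerm F₀ hK₀ (n + 1) ⟶ syzygyTerm F₀ hK₀ n :=
  ModuleCat.ofHom (syzygyStage F₀ hK₀ n).2.2.finCover

lemma range_syzygyD_zero : LinearMap.range (syzygyD F₀ hK₀ 0).hom = K₀ :=
  Submodule.FG.range_finCover _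

def syzygyAugmentation : syzygyTerm F₀ hK₀ 0 ⟶ ModuleCat.of R (F₀ ⧸ K₀) :=
  ModuleCat.ofHom K₀.mkQ

lemma exact_syzygyD_zero : Function.Exact (syzygyD F₀ hK₀ 0) (syzygyAugmentation F₀ hK₀) :=
  LinearMap.exact_iff.mpr (K₀.ker_mkQ.trans (range_syzygyD_zero F₀ hK₀).symm)

lemma exact_syzygyD_succ (n : ℕ) :
    Function.Exact (syzygyD F₀ hK₀ (n + 1)) (syzygyD F₀ hK₀ n) :=
  LinearMap.exact_iff.mpr (Submodule.FG.range_finCover _).symm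

lemma finite_syzygyTerm [Module.Finite R F₀] : ∀ n, Module.Finite R (syzygyTerm F₀ hK₀ n)
  | 0 => ‹_›
  | _ + 1 => inferInstanceAs (Module.Finite R (Fin _ → R))

lemma projective_syzygyTerm [Module.Projective R F₀] :
    ∀ n, Module.Projective R (syzygyTerm F₀ hK₀ n)
  | 0 => ‹_›
  | _ + 1 => inferInstanceAs (Module.Projective R (Fin _ → R))

theorem isSuperFinitelyPresented_quotient [Module.Finite R F₀] [Module.Projective R F₀] :
    IsSuperFinitelyPresented R (ModuleCat.of R (F₀ ⧸ K₀)) :=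
  have hK : K₀.FG := IsNoetherian.noetherian K₀
  ⟨syzygyTerm F₀ hK, syzygyD F₀ hK, syzygyAugmentation F₀ hK, finite_syzygyTerm F₀ hK,
    projective_syzygyTerm F₀ hK, K₀.mkQ_surjective, exact_syzygyD_zero F₀ hK,
    exact_syzygyD_succ F₀ hK⟩

end Syzygies

theorem Module.Baer.of_isWeakInjective [IsNoetherianRing R] {M : ModuleCat.{0} R}
    (hM : IsWeakInjective R M) : Module.Baer R M := by
  intro I g
  have hI : I.FG := IsNoetherian.noetherian I
  let F₀ := ModuleCat.of R R
  exact exists_extension_of_extVanishes_one (syzygyTerm F₀ hI) (syzygyD F₀ hI)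
    (syzygyAugmentation F₀ hI) (projective_syzygyTerm F₀ hI) I.mkQ_surjective
    (exact_syzygyD_zero F₀ hI) (exact_syzygyD_succ F₀ hI)
    (hM _ (isSuperFinitelyPresented_quotient F₀)) (range_syzygyD_zero F₀ hI) g

/-- If `R` is left Noetherian, then a left `R`-module is weak injective iff it is injective. -/
theorem stmt2 (hR : IsNoetherianRing R) (M : ModuleCat.{0} R) :
    IsWeakInjective R M ↔ Module.Injective R M :=
  ⟨fun hM => (Module.Baer.of_isWeakInjective hM).injective,
    fun _ N _ => extVanishes_one_of_injective N⟩
end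
end

section
/- If M is a Gorenstein weak injective R-module, then Ext^i_R(N, M) = 0 for every super finitely presented R-module N of finite projective dimension and every i ≥ 1. -/
open CategoryTheory Opposite

noncomputable section

variable (R : Type) [Ring R]

/-- `N` is super finitely presented of finite projective dimension, i.e. admits a finite
resolution `0 → Fₙ → ⋯ → F₀ → N → 0` by finitely generated projective modules. -/
def IsSFPOfFinitePd (N : ModuleCat.{0} R) : Prop :=
  ∃ (n : ℕ) (F : ℕ → ModuleCat.{0} R) (d : ∀ k, F (k + 1) ⟶ F k) (ε : F 0 ⟶ N),
    (∀ k, Module.Finite R (F k)) ∧ (∀ k, Module.Projective R (F k)) ∧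
    Function.Surjective ε ∧ Function.Exact (d 0) ε ∧
    (∀ k, Function.Exact (d (k + 1)) (d k)) ∧
    ∀ k, n < k → Subsingleton (F k)

/-- `M` is Gorenstein weak injective: there is an exact sequence
`⋯ → W₁ → W₀ → W⁰ → W¹ → ⋯` of weak injective modules (indexed here by `ℤ`) with
`M = Coker(W₁ → W₀)` (witnessed by a surjection `π : W 0 → M` and an injection
`ι : M → W 1` with `π ≫ ι = d 0`), which stays exact after applying `Hom_R(N, -)`
for every super finitely presented `N` of finite projective dimension. -/
def IsGorensteinWeakInjective (M : ModuleCat.{0} R) : Prop :=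
  ∃ (W : ℤ → ModuleCat.{0} R) (d : ∀ n : ℤ, W n ⟶ W (n + 1))
      (π : W 0 ⟶ M) (ι : M ⟶ W 1),
    (∀ n, IsWeakInjective R (W n)) ∧
    (∀ n, Function.Exact (d n) (d (n + 1))) ∧
    Function.Surjective π ∧ Function.Injective ι ∧ π ≫ ι = d 0 ∧
    Function.Exact (d (-1)) π ∧
    ∀ N : ModuleCat.{0} R, IsSFPOfFinitePd R N →
      ∀ (n : ℤ) (g : N ⟶ W (n + 1)), g ≫ d (n + 1) = 0 → ∃ f : N ⟶ W n, f ≫ d n = g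

/-!
Compute `Ext^{k+1}(N, M)` with a finite resolution `F` of `N` by finitely generated projectives.
By projectivity of the `F_i`, a cocycle `f : F_{k+1} → M` lifts to a chain map
`h_j : F_{k+1+j} → W₋ⱼ` into the left half `⋯ → W₋₁ → W₀ → M → 0` of the resolution of `M`.
The cokernels of `F` are again super finitely presented, so weak injectivity of `W₋ⱼ` makes every
cocycle `F_{m+1} → W₋ⱼ` a coboundary; as `F` vanishes in high degrees, this builds a
null-homotopy of `h` from the top down, and then `f = h₀ ≫ π` is a coboundary.
-/

section

open Limits

variable {R}

lemma ModuleCat.comp_eq_zero_of_exact {X Y Z : ModuleCat.{0} R} {f : X ⟶ Y} {g : Y ⟶ Z}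
    (h : Function.Exact f g) : f ≫ g = 0 :=
  ModuleCat.hom_ext h.linearMap_comp_eq_zero

def CategoryTheory.ProjectiveResolution.ofExact_s4 {N : ModuleCat.{0} R} (F : ℕ → ModuleCat.{0} R)
    (d : ∀ n, F (n + 1) ⟶ F n) (ε : F 0 ⟶ N) (hproj : ∀ n, Module.Projective R (F n))
    (hε : Function.Surjective ε) (hex₀ : Function.Exact (d 0) ε)
    (hex : ∀ n, Function.Exact (d (n + 1)) (d n)) : ProjectiveResolution N where
  complex := ChainComplex.of F d fun n => ModuleCat.comp_eq_zero_of_exact (hex n)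
  projective n := (IsProjective.iff_projective (F n)).mp (hproj n)
  π := (ChainComplex.toSingle₀Equiv _ _).symm
    ⟨ε, by
      change ChainComplex.of.d F d (0 + 1) 0 ≫ ε = 0
      rw [ChainComplex.of_d]
      exact ModuleCat.comp_eq_zero_of_exact hex₀⟩
  quasiIso := ⟨fun n => by
    cases n with
    | zero =>
      rw [ChainComplex.quasiIsoAt₀_iff, ShortComplex.quasiIso_iff_of_zeros' _ rfl rfl rfl,
        ShortComplex.ShortExact.moduleCat_exact_iff_function_exact, ModuleCat.epi_iff_surjective]
      change Function.Exact (ChainComplex.of.d F d (0 + 1) 0) ε ∧ Function.Surjective ε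
      rw [ChainComplex.of_d]
      exact ⟨hex₀, hε⟩
    | succ n =>
      rw [quasiIsoAt_iff_exactAt' _ _ (ChainComplex.exactAt_succ_single_obj _ _),
        HomologicalComplex.exactAt_iff' _ (n + 1 + 1) (n + 1) n (by simp) (by simp),
        ShortComplex.ShortExact.moduleCat_exact_iff_function_exact]
      change Function.Exact (ChainComplex.of.d F d (n + 1 + 1) (n + 1))
        (ChainComplex.of.d F d (n + 1) n)
      rw [ChainComplex.of_d, ChainComplex.of_d]
      exact hex n⟩

lemma CategoryTheory.ProjectiveResolution.subsingleton_ext_succ_iff {N : ModuleCat.{0} R}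
    (P : ProjectiveResolution N) (Y : ModuleCat.{0} R) (k : ℕ) :
    Subsingleton (((Ext ℤ (ModuleCat.{0} R) (k + 1)).obj (op N)).obj Y) ↔
      ∀ f : P.complex.X (k + 1) ⟶ Y, P.complex.d (k + 2) (k + 1) ≫ f = 0 →
        ∃ g : P.complex.X k ⟶ Y, P.complex.d (k + 1) k ≫ g = f := by
  rw [← ModuleCat.isZero_iff_subsingleton, Iso.isZero_iff (P.isoExt (k + 1) Y),
    ← HomologicalComplex.exactAt_iff_isZero_homology,
    HomologicalComplex.exactAt_iff' _ k (k + 1) (k + 2) (by simp) (by simp),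
    ShortComplex.moduleCat_exact_iff]
  rfl

lemma subsingleton_ext_succ_iff_of_exact {N : ModuleCat.{0} R} (F : ℕ → ModuleCat.{0} R)
    (d : ∀ n, F (n + 1) ⟶ F n) (ε : F 0 ⟶ N) (hproj : ∀ n, Module.Projective R (F n))
    (hε : Function.Surjective ε) (hex₀ : Function.Exact (d 0) ε)
    (hex : ∀ n, Function.Exact (d (n + 1)) (d n)) (Y : ModuleCat.{0} R) (k : ℕ) :
    Subsingleton (((Ext ℤ (ModuleCat.{0} R) (k + 1)).obj (op N)).obj Y) ↔
      ∀ f : F (k + 1) ⟶ Y, d (k + 1) ≫ f = 0 → ∃ g : F k ⟶ Y, d k ≫ g = f := by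
  rw [(ProjectiveResolution.ofExact_s4 F d ε hproj hε hex₀ hex).subsingleton_ext_succ_iff]
  change (∀ f, ChainComplex.of.d F d (k + 1 + 1) (k + 1) ≫ f = 0 →
    ∃ g, ChainComplex.of.d F d (k + 1) k ≫ g = f) ↔ _
  rw [ChainComplex.of_d, ChainComplex.of_d]

lemma IsWeakInjective.exists_comp_eq {W : ModuleCat.{0} R} (hW : IsWeakInjective R W)
    {F : ℕ → ModuleCat.{0} R} {d : ∀ n, F (n + 1) ⟶ F n} (hfin : ∀ n, Module.Finite R (F n))
    (hproj : ∀ n, Module.Projective R (F n)) (hex : ∀ n, Function.Exact (d (n + 1)) (d n))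
    (m : ℕ) (u : F (m + 1) ⟶ W) (hu : d (m + 1) ≫ u = 0) : ∃ t : F m ⟶ W, d m ≫ t = u := by
  let Q := ModuleCat.of R (F m ⧸ LinearMap.range (d m).hom)
  let ε : F m ⟶ Q := ModuleCat.ofHom (LinearMap.range (d m).hom).mkQ
  have hε : Function.Surjective ε := Submodule.mkQ_surjective _
  have hex₀ : Function.Exact (d m) ε := (d m).hom.exact_map_mkQ_range
  have hQ : IsSuperFinitelyPresented R Q :=
    ⟨fun i => F (m + i), fun i => d (m + i), ε, fun i => hfin _, fun i => hproj _, hε, hex₀,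
      fun i => hex _⟩
  exact (subsingleton_ext_succ_iff_of_exact (fun i => F (m + i)) (fun i => d (m + i)) ε
    (fun i => hproj _) hε hex₀ (fun i => hex _) W 0).mp (hW Q hQ) u hu

lemma ModuleCat.exists_comp_eq_of_exact {P X Y Z : ModuleCat.{0} R} [Module.Projective R P]
    {α : X ⟶ Y} {β : Y ⟶ Z} (h : Function.Exact α β) (u : P ⟶ Y) (hu : u ≫ β = 0) :
    ∃ v : P ⟶ X, v ≫ α = u := by
  have hS : (ShortComplex.mk α β (comp_eq_zero_of_exact h)).Exact :=
    (ShortComplex.ShortExact.moduleCat_exact_iff_function_exact _).mpr h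
  exact ⟨hS.liftFromProjective u hu, hS.liftFromProjective_comp u hu⟩

lemma ModuleCat.exists_comp_eq_of_surjective {P X Y : ModuleCat.{0} R} [Module.Projective R P]
    {π : X ⟶ Y} (hπ : Function.Surjective π) (u : P ⟶ Y) : ∃ v : P ⟶ X, v ≫ π = u :=
  have : Epi π := (ModuleCat.epi_iff_surjective π).mpr hπ
  ⟨Projective.factorThru u π, Projective.factorThru_comp u π⟩

section Comparison

variable {A B : ℕ → ModuleCat.{0} R} {dA : ∀ j, A (j + 1) ⟶ A j} {eB : ∀ j, B (j + 1) ⟶ B j}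
  {M : ModuleCat.{0} R} {π : B 0 ⟶ M}

lemma exists_chainMap_lift (hA : ∀ j, Module.Projective R (A j))
    (hdA : ∀ j, dA (j + 1) ≫ dA j = 0) (hπ : Function.Surjective π)
    (hexπ : Function.Exact (eB 0) π) (hexB : ∀ j, Function.Exact (eB (j + 1)) (eB j))
    (f : A 1 ⟶ M) (hf : dA 1 ≫ f = 0) :
    ∃ h : ∀ j, A (j + 1) ⟶ B j, h 0 ≫ π = f ∧ ∀ j, h (j + 1) ≫ eB j = dA (j + 1) ≫ h j := by
  -- `v` witnesses that `dA (j + 1) ≫ h` lands in the image of `eB j`, so the recursion can go on.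
  let Liftable (j : ℕ) : Type :=
    {h : A (j + 1) ⟶ B j // ∃ v : A (j + 2) ⟶ B (j + 1), v ≫ eB j = dA (j + 1) ≫ h}
  have base : ∃ h₀ : Liftable 0, h₀.1 ≫ π = f := by
    have := hA 1
    have := hA 2
    obtain ⟨h₀, hh₀⟩ := ModuleCat.exists_comp_eq_of_surjective hπ f
    obtain ⟨v, hv⟩ := ModuleCat.exists_comp_eq_of_exact hexπ (dA 1 ≫ h₀)
      (by rw [Category.assoc, hh₀, hf])
    exact ⟨⟨h₀, v, hv⟩, hh₀⟩
  have step (j : ℕ) (h : Liftable j) : ∃ h' : Liftable (j + 1), h'.1 ≫ eB j = dA (j + 1) ≫ h.1 := by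
    obtain ⟨v, hv⟩ := h.2
    have := hA (j + 3)
    obtain ⟨w, hw⟩ := ModuleCat.exists_comp_eq_of_exact (hexB j) (dA (j + 2) ≫ v)
      (by rw [Category.assoc, hv, ← Category.assoc, hdA, zero_comp])
    exact ⟨⟨v, w, hw⟩, hv⟩
  obtain ⟨h₀, hh₀⟩ := base
  choose next hnext using step
  let H (j : ℕ) : Liftable j := Nat.rec h₀ next j
  exact ⟨fun j => (H j).1, hh₀, fun j => hnext j (H j)⟩

lemma exists_nullHomotopic_of_subsingleton (heB : ∀ j, eB (j + 1) ≫ eB j = 0)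
    (h : ∀ j, A (j + 1) ⟶ B j) (hh : ∀ j, h (j + 1) ≫ eB j = dA (j + 1) ≫ h j)
    (hfact : ∀ j (u : A (j + 1) ⟶ B j), dA (j + 1) ≫ u = 0 → ∃ t : A j ⟶ B j, dA j ≫ t = u)
    {J : ℕ} (hJ : Subsingleton (A (J + 1))) :
    ∃ (t : A 0 ⟶ B 0) (s : A 1 ⟶ B 1), h 0 = dA 0 ≫ t + s ≫ eB 0 := by
  suffices ∀ j ≤ J, ∃ (t : A j ⟶ B j) (s : A (j + 1) ⟶ B (j + 1)), h j = dA j ≫ t + s ≫ eB j from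
    this 0 (Nat.zero_le J)
  intro j hj
  induction hj using Nat.decreasingInduction with
  | self => exact ⟨0, 0, by simpa using (ModuleCat.isZero_of_subsingleton _).eq_of_src (h J) 0⟩
  | of_succ j _ ih =>
    obtain ⟨t', s', hts'⟩ := ih
    obtain ⟨t, ht⟩ := hfact j (h j - t' ≫ eB j) (by
      rw [Preadditive.comp_sub, ← hh, hts', Preadditive.add_comp, Category.assoc s', heB,
        comp_zero, add_zero, Category.assoc, sub_self])
    exact ⟨t, t', by rw [ht, sub_add_cancel]⟩

lemma exists_comp_eq_of_resolution (hA : ∀ j, Module.Projective R (A j))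
    (hdA : ∀ j, dA (j + 1) ≫ dA j = 0) {J : ℕ} (hJ : Subsingleton (A (J + 1)))
    (hπ : Function.Surjective π) (hexπ : Function.Exact (eB 0) π)
    (hexB : ∀ j, Function.Exact (eB (j + 1)) (eB j))
    (hfact : ∀ j (u : A (j + 1) ⟶ B j), dA (j + 1) ≫ u = 0 → ∃ t : A j ⟶ B j, dA j ≫ t = u)
    (f : A 1 ⟶ M) (hf : dA 1 ≫ f = 0) : ∃ g : A 0 ⟶ M, dA 0 ≫ g = f := by
  obtain ⟨h, hh₀, hh⟩ := exists_chainMap_lift hA hdA hπ hexπ hexB f hf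
  obtain ⟨t, s, hts⟩ := exists_nullHomotopic_of_subsingleton
    (fun j => ModuleCat.comp_eq_zero_of_exact (hexB j)) h hh hfact hJ
  refine ⟨t ≫ π, ?_⟩
  rw [← hh₀, hts, Preadditive.add_comp, Category.assoc, Category.assoc,
    ModuleCat.comp_eq_zero_of_exact hexπ, comp_zero, add_zero]

end Comparison

lemma exact_comp_eqToHom_iff {X Y Y' Z : ModuleCat.{0} R} (f : X ⟶ Y) (e : Y = Y') (g : Y' ⟶ Z) :
    Function.Exact (f ≫ eqToHom e) g ↔ Function.Exact f (eqToHom e ≫ g) := by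
  subst e
  simp

lemma IsGorensteinWeakInjective.exists_resolution {M : ModuleCat.{0} R}
    (hM : IsGorensteinWeakInjective R M) :
    ∃ (B : ℕ → ModuleCat.{0} R) (e : ∀ j, B (j + 1) ⟶ B j) (π : B 0 ⟶ M),
      (∀ j, IsWeakInjective R (B j)) ∧ Function.Surjective π ∧ Function.Exact (e 0) π ∧
        ∀ j, Function.Exact (e (j + 1)) (e j) := by
  obtain ⟨W, d, π, -, hW, hex, hπ, -, -, hexπ, -⟩ := hM
  have hidx (j : ℕ) : W (-((j + 1 : ℕ) : ℤ) + 1) = W (-j) := congrArg W (by push_cast; ring)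
  refine ⟨fun j => W (-j), fun j => d _ ≫ eqToHom (hidx j), π, fun j => hW _, hπ, ?_, fun j => ?_⟩
  · rw [exact_comp_eqToHom_iff]
    exact hexπ
  · have shift {a b c : ℤ} (hab : a + 1 = b) (hbc : b + 1 = c) :
        Function.Exact (d a ≫ eqToHom (congrArg W hab)) (d b ≫ eqToHom (congrArg W hbc)) := by
      subst hab hbc
      simpa using hex a
    exact shift (by push_cast; ring) (by push_cast; ring)

end

/-- If `M` is Gorenstein weak injective, then `Ext^i_R(N, M) = 0` for every super finitely
presented `N` of finite projective dimension and every `i ≥ 1`. -/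
theorem stmt4 (M N : ModuleCat.{0} R) (hM : IsGorensteinWeakInjective R M)
    (hN : IsSFPOfFinitePd R N) :
    ∀ i : ℕ, 1 ≤ i → ExtVanishes R N M i := by
  obtain ⟨n, F, d, ε, hfin, hproj, hε, hex₀, hex, hvan⟩ := hN
  obtain ⟨B, e, π, hB, hπ, hexπ, hexB⟩ := hM.exists_resolution
  intro i hi
  obtain ⟨k, rfl⟩ : ∃ k, i = k + 1 := ⟨i - 1, by omega⟩
  refine (subsingleton_ext_succ_iff_of_exact F d ε hproj hε hex₀ hex M k).mpr fun f hf => ?_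
  exact exists_comp_eq_of_resolution (A := fun j => F (k + j)) (fun j => hproj _)
    (fun j => ModuleCat.comp_eq_zero_of_exact (hex _)) (hvan (k + (n + 1)) (by omega))
    hπ hexπ hexB (fun j => (hB j).exists_comp_eq hfin hproj hex (k + j)) f hf
end
end

section
/- Every Gorenstein flat right R-module is Gorenstein weak flat. -/
open CategoryTheory Opposite

noncomputable section

variable (R : Type) [Ring R]

/-- The subgroup of relations defining `M ⊗_R N` as a quotient of `M ⊗_ℤ N`,
for a right `R`-module `M` and a left `R`-module `N`. -/
def tensorRel (M : Type) [AddCommGroup M] [Module Rᵐᵒᵖ M]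
    (N : Type) [AddCommGroup N] [Module R N] : Submodule ℤ (TensorProduct ℤ M N) :=
  Submodule.span ℤ
    {x | ∃ (m : M) (r : R) (n : N),
      x = (MulOpposite.op r • m) ⊗ₜ[ℤ] n - m ⊗ₜ[ℤ] (r • n)}

/-- The tensor product `M ⊗_R N` of a right `R`-module and a left `R`-module. -/
abbrev RTensor (M : Type) [AddCommGroup M] [Module Rᵐᵒᵖ M]
    (N : Type) [AddCommGroup N] [Module R N] :=
  TensorProduct ℤ M N ⧸ tensorRel R M N

variable {M N N' M' : Type} [AddCommGroup M] [Module Rᵐᵒᵖ M] [AddCommGroup N] [Module R N]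
  [AddCommGroup N'] [Module R N'] [AddCommGroup M'] [Module Rᵐᵒᵖ M']

/-- The map `M ⊗_R N → M ⊗_R N'` induced by an `R`-linear map `N → N'`. -/
def rtMapRight (g : N →ₗ[R] N') : RTensor R M N →ₗ[ℤ] RTensor R M N' :=
  Submodule.mapQ _ _ (LinearMap.lTensor M g.toAddMonoidHom.toIntLinearMap) (by
    rw [tensorRel, Submodule.span_le]
    rintro _ ⟨m, r, n, rfl⟩
    simp only [SetLike.mem_coe, Submodule.mem_comap, map_sub, LinearMap.lTensor_tmul]
    refine Submodule.subset_span ⟨m, r, g n, ?_⟩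
    erw [map_sub, LinearMap.lTensor_tmul, LinearMap.lTensor_tmul]
    simp [tensorRel, map_smul])

/-- The map `M ⊗_R N → M' ⊗_R N` induced by a right `R`-linear map `M → M'`. -/
def rtMapLeft (f : M →ₗ[Rᵐᵒᵖ] M') : RTensor R M N →ₗ[ℤ] RTensor R M' N :=
  Submodule.mapQ _ _ (LinearMap.rTensor N f.toAddMonoidHom.toIntLinearMap) (by
    rw [tensorRel, Submodule.span_le]
    rintro _ ⟨m, r, n, rfl⟩
    simp only [SetLike.mem_coe, Submodule.mem_comap, map_sub, LinearMap.rTensor_tmul]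
    refine Submodule.subset_span ⟨f m, r, n, ?_⟩
    erw [map_sub, LinearMap.rTensor_tmul, LinearMap.rTensor_tmul]
    simp [tensorRel, map_smul])

/-- A right `R`-module `M` is weak flat if `Tor₁^R(M, N) = 0` for every super finitely
presented left `R`-module `N`: for every short exact sequence `0 → K → P → N → 0` with `P`
projective, the induced map `M ⊗_R K → M ⊗_R P` is injective. -/
def IsWeakFlat (M : ModuleCat.{0} Rᵐᵒᵖ) : Prop :=
  ∀ N : ModuleCat.{0} R, IsSuperFinitelyPresented R N →
    ∀ (K P : ModuleCat.{0} R) (i : K ⟶ P) (p : P ⟶ N),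
      Module.Projective R P → Function.Injective i → Function.Surjective p →
        Function.Exact i p →
          Function.Injective (rtMapRight R (M := M) (i.hom : K →ₗ[R] P))

/-- `M` is Gorenstein weak flat: there is an exact sequence
`⋯ → W₁ → W₀ → W⁰ → W¹ → ⋯` of weak flat right modules with `M = Coker(W₁ → W₀)`,
which stays exact after applying `- ⊗_R N` for every super finitely presented left
module `N` of finite projective dimension. -/
def IsGorensteinWeakFlat (M : ModuleCat.{0} Rᵐᵒᵖ) : Prop :=
  ∃ (W : ℤ → ModuleCat.{0} Rᵐᵒᵖ) (d : ∀ n : ℤ, W n ⟶ W (n + 1))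
      (π : W 0 ⟶ M) (ι : M ⟶ W 1),
    (∀ n, IsWeakFlat R (W n)) ∧
    (∀ n, Function.Exact (d n) (d (n + 1))) ∧
    Function.Surjective π ∧ Function.Injective ι ∧ π ≫ ι = d 0 ∧
    Function.Exact (d (-1)) π ∧
    ∀ N : ModuleCat.{0} R, IsSFPOfFinitePd R N → ∀ n : ℤ,
      Function.Exact (rtMapLeft R (N := N) ((d n).hom : W n →ₗ[Rᵐᵒᵖ] W (n + 1)))
        (rtMapLeft R (N := N) ((d (n + 1)).hom : W (n + 1) →ₗ[Rᵐᵒᵖ] W (n + 1 + 1)))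

/-- A right `R`-module `M` is flat if `M ⊗_R -` preserves injections of left modules. -/
def IsFlatRight (M : ModuleCat.{0} Rᵐᵒᵖ) : Prop :=
  ∀ (A B : ModuleCat.{0} R) (f : A ⟶ B), Function.Injective f →
    Function.Injective (rtMapRight R (M := M) (f.hom : A →ₗ[R] B))

/-- `M` is Gorenstein flat: there is an exact sequence of flat right modules
`⋯ → F₁ → F₀ → F⁰ → F¹ → ⋯` with `M = Coker(F₁ → F₀)` which stays exact after
applying `- ⊗_R I` for every injective left `R`-module `I`. -/
def IsGorensteinFlat (M : ModuleCat.{0} Rᵐᵒᵖ) : Prop :=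
  ∃ (W : ℤ → ModuleCat.{0} Rᵐᵒᵖ) (d : ∀ n : ℤ, W n ⟶ W (n + 1))
      (π : W 0 ⟶ M) (ι : M ⟶ W 1),
    (∀ n, IsFlatRight R (W n)) ∧
    (∀ n, Function.Exact (d n) (d (n + 1))) ∧
    Function.Surjective π ∧ Function.Injective ι ∧ π ≫ ι = d 0 ∧
    Function.Exact (d (-1)) π ∧
    ∀ I : ModuleCat.{0} R, Module.Injective R I → ∀ n : ℤ,
      Function.Exact (rtMapLeft R (N := I) ((d n).hom : W n →ₗ[Rᵐᵒᵖ] W (n + 1)))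
        (rtMapLeft R (N := I) ((d (n + 1)).hom : W (n + 1) →ₗ[Rᵐᵒᵖ] W (n + 1 + 1)))

/-!
An exact complex `W` of flat right modules stays exact after tensoring with any left module `N`
that has a finite resolution by finitely generated projectives. For `N = Rᵏ` the complex
`W ⊗_R N` is `Wᵏ`; exactness passes to retracts, hence to finitely generated projectives; and
it passes along `0 → K → P → N → 0`, which becomes a short exact sequence of complexes after
tensoring with the degreewise flat `W`. Induction on the length of the resolution finishes.
Since flat modules are weak flat, the complete flat resolution of a Gorenstein flat module is
therefore also a complete weak flat resolution.
-/

variable {R}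

section Functoriality

variable {X X' X'' : Type} [AddCommGroup X] [Module Rᵐᵒᵖ X] [AddCommGroup X'] [Module Rᵐᵒᵖ X']
  [AddCommGroup X''] [Module Rᵐᵒᵖ X'']
variable {A B C : Type} [AddCommGroup A] [Module R A] [AddCommGroup B] [Module R B]
  [AddCommGroup C] [Module R C]

lemma RTensor.hom_ext {Y : Type} [AddCommGroup Y] {φ ψ : RTensor R X A →ₗ[ℤ] Y}
    (h : ∀ m a, φ (Submodule.Quotient.mk (m ⊗ₜ a)) = ψ (Submodule.Quotient.mk (m ⊗ₜ a))) :
    φ = ψ :=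
  Submodule.linearMap_qext _ (TensorProduct.ext' h)

lemma RTensor.mk_op_smul_tmul (m : X) (r : R) (a : A) :
    (Submodule.Quotient.mk ((MulOpposite.op r • m) ⊗ₜ[ℤ] a) : RTensor R X A)
      = Submodule.Quotient.mk (m ⊗ₜ[ℤ] (r • a)) :=
  (Submodule.Quotient.eq _).mpr (Submodule.subset_span ⟨m, r, a, rfl⟩)

@[simp]
lemma rtMapRight_mk_tmul (g : A →ₗ[R] B) (m : X) (a : A) :
    rtMapRight R g (Submodule.Quotient.mk (m ⊗ₜ[ℤ] a)) = Submodule.Quotient.mk (m ⊗ₜ[ℤ] g a) :=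
  rfl

@[simp]
lemma rtMapLeft_mk_tmul (f : X →ₗ[Rᵐᵒᵖ] X') (m : X) (a : A) :
    rtMapLeft R f (Submodule.Quotient.mk (m ⊗ₜ[ℤ] a)) = Submodule.Quotient.mk (f m ⊗ₜ[ℤ] a) :=
  rfl

lemma rtMapRight_id : rtMapRight R (M := X) (LinearMap.id : A →ₗ[R] A) = LinearMap.id :=
  RTensor.hom_ext fun _ _ => rfl

lemma rtMapRight_comp (g : A →ₗ[R] B) (g' : B →ₗ[R] C) :
    rtMapRight R (M := X) (g' ∘ₗ g) = rtMapRight R g' ∘ₗ rtMapRight R g :=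
  RTensor.hom_ext fun _ _ => rfl

lemma rtMapLeft_comp (f : X →ₗ[Rᵐᵒᵖ] X') (f' : X' →ₗ[Rᵐᵒᵖ] X'') :
    rtMapLeft R (N := A) (f' ∘ₗ f) = rtMapLeft R f' ∘ₗ rtMapLeft R f :=
  RTensor.hom_ext fun _ _ => rfl

lemma rtMapRight_zero : rtMapRight R (M := X) (0 : A →ₗ[R] B) = 0 :=
  RTensor.hom_ext fun _ _ => by simp

lemma rtMapLeft_zero : rtMapLeft R (N := A) (0 : X →ₗ[Rᵐᵒᵖ] X') = 0 :=
  RTensor.hom_ext fun _ _ => by simp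

lemma rtMapLeft_rtMapRight (f : X →ₗ[Rᵐᵒᵖ] X') (g : A →ₗ[R] B) (x : RTensor R X A) :
    rtMapLeft R f (rtMapRight R g x) = rtMapRight R g (rtMapLeft R f x) :=
  LinearMap.congr_fun (RTensor.hom_ext (φ := rtMapLeft R f ∘ₗ rtMapRight R g)
    (ψ := rtMapRight R g ∘ₗ rtMapLeft R f) fun _ _ => rfl) x

lemma rtMapRight_surjective {g : A →ₗ[R] B} (hg : Function.Surjective g) :
    Function.Surjective (rtMapRight R (M := X) g) := by
  intro y
  obtain ⟨t, rfl⟩ := Submodule.Quotient.mk_surjective _ y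
  obtain ⟨s, rfl⟩ := LinearMap.lTensor_surjective X (g := g.toAddMonoidHom.toIntLinearMap) hg t
  exact ⟨Submodule.Quotient.mk s, rfl⟩

lemma rtMapRight_exact {i : A →ₗ[R] B} {p : B →ₗ[R] C} (hp : Function.Surjective p)
    (hip : Function.Exact i p) :
    Function.Exact (rtMapRight R (M := X) i) (rtMapRight R (M := X) p) := by
  set i' := i.toAddMonoidHom.toIntLinearMap
  set p' := p.toAddMonoidHom.toIntLinearMap
  have hrel : tensorRel R X C ≤ (tensorRel R X B).map (p'.lTensor X) := by
    refine Submodule.span_le.mpr ?_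
    rintro _ ⟨m, r, c, rfl⟩
    obtain ⟨b, rfl⟩ := hp c
    refine ⟨_, Submodule.subset_span ⟨m, r, b, rfl⟩, ?_⟩
    simp [p', map_smul]
  intro y
  constructor
  · intro hy
    obtain ⟨t, rfl⟩ := Submodule.Quotient.mk_surjective _ y
    obtain ⟨z, hz, hzt⟩ := hrel ((Submodule.Quotient.mk_eq_zero _).mp hy)
    obtain ⟨w, hw⟩ := (lTensor_exact X (f := i') (g := p') hip hp (t - z)).mp
      (by rw [map_sub, sub_eq_zero]; exact hzt.symm)
    refine ⟨Submodule.Quotient.mk w, ?_⟩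
    refine (Submodule.Quotient.eq _).mpr ?_
    have hdiff : i'.lTensor X w - t = -z := by rw [hw]; abel
    exact hdiff ▸ neg_mem hz
  · rintro ⟨x, rfl⟩
    rw [← LinearMap.comp_apply, ← rtMapRight_comp, hip.linearMap_comp_eq_zero, rtMapRight_zero,
      LinearMap.zero_apply]

end Functoriality

def TensorExact (W : ℤ → ModuleCat.{0} Rᵐᵒᵖ) (d : ∀ n : ℤ, W n ⟶ W (n + 1))
    (A : Type) [AddCommGroup A] [Module R A] : Prop :=
  ∀ n : ℤ, Function.Exact (rtMapLeft R (N := A) (d n).hom) (rtMapLeft R (N := A) (d (n + 1)).hom)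

section TensorExact

variable {W : ℤ → ModuleCat.{0} Rᵐᵒᵖ} {d : ∀ n : ℤ, W n ⟶ W (n + 1)}
variable {A B : Type} [AddCommGroup A] [Module R A] [AddCommGroup B] [Module R B]

lemma rtMapLeft_comp_rtMapLeft_eq_zero (hd : ∀ n, Function.Exact (d n) (d (n + 1))) (n : ℤ) :
    rtMapLeft R (N := A) (d (n + 1)).hom ∘ₗ rtMapLeft R (d n).hom = 0 := by
  rw [← rtMapLeft_comp, (hd n).linearMap_comp_eq_zero, rtMapLeft_zero]

lemma TensorExact.of_ker_subset_range (hd : ∀ n, Function.Exact (d n) (d (n + 1)))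
    (h : ∀ n y, rtMapLeft R (N := A) (d (n + 1)).hom y = 0 →
      ∃ x, rtMapLeft R (N := A) (d n).hom x = y) :
    TensorExact W d A := fun n y =>
  ⟨h n y, by rintro ⟨x, rfl⟩; exact LinearMap.congr_fun (rtMapLeft_comp_rtMapLeft_eq_zero hd n) x⟩

lemma TensorExact.of_retract (hd : ∀ n, Function.Exact (d n) (d (n + 1)))
    (s : A →ₗ[R] B) (r : B →ₗ[R] A) (hrs : r ∘ₗ s = LinearMap.id) (hB : TensorExact W d B) :
    TensorExact W d A := by
  refine .of_ker_subset_range hd fun n y hy => ?_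
  obtain ⟨z, hz⟩ := (hB n (rtMapRight R s y)).mp (by rw [rtMapLeft_rtMapRight, hy, map_zero])
  refine ⟨rtMapRight R r z, ?_⟩
  rw [rtMapLeft_rtMapRight, hz, ← LinearMap.comp_apply, ← rtMapRight_comp, hrs, rtMapRight_id,
    LinearMap.id_apply]

end TensorExact

section Pi

variable {X X' : Type} [AddCommGroup X] [Module Rᵐᵒᵖ X] [AddCommGroup X'] [Module Rᵐᵒᵖ X']
variable {ι : Type}

variable (R X ι) in
def RTensor.evalPi : RTensor R X (ι → R) →ₗ[ℤ] (ι → X) :=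
  (tensorRel R X (ι → R)).liftQ
    (TensorProduct.lift (LinearMap.mk₂ ℤ (fun m v j => MulOpposite.op (v j) • m)
      (fun _ _ _ => funext fun _ => smul_add _ _ _)
      (fun _ _ _ => funext fun _ => smul_comm _ _ _)
      (fun _ _ _ => funext fun _ => by simp [add_smul])
      (fun _ _ _ => funext fun _ => by
        simp only [Pi.smul_apply, MulOpposite.op_smul, smul_assoc]))).toAddMonoidHom.toIntLinearMap
    (Submodule.span_le.mpr <| by
      rintro _ ⟨m, r, v, rfl⟩
      ext j
      simp [smul_smul])

@[simp]
lemma RTensor.evalPi_mk_tmul (m : X) (v : ι → R) :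
    RTensor.evalPi R X ι (Submodule.Quotient.mk (m ⊗ₜ[ℤ] v)) = fun j => MulOpposite.op (v j) • m :=
  rfl

variable (R X ι) in
def RTensor.ofPi [Fintype ι] [DecidableEq ι] : (ι → X) →ₗ[ℤ] RTensor R X (ι → R) :=
  ∑ j, (tensorRel R X (ι → R)).mkQ ∘ₗ (TensorProduct.mk ℤ X (ι → R)).flip (Pi.single j 1) ∘ₗ
    LinearMap.proj j

lemma RTensor.ofPi_apply [Fintype ι] [DecidableEq ι] (u : ι → X) :
    RTensor.ofPi R X ι u = ∑ j, Submodule.Quotient.mk (u j ⊗ₜ[ℤ] Pi.single j 1) := by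
  rw [RTensor.ofPi, LinearMap.sum_apply]
  rfl

lemma RTensor.ofPi_evalPi [Fintype ι] [DecidableEq ι] (x : RTensor R X (ι → R)) :
    RTensor.ofPi R X ι (RTensor.evalPi R X ι x) = x := by
  refine LinearMap.congr_fun (RTensor.hom_ext (φ := RTensor.ofPi R X ι ∘ₗ RTensor.evalPi R X ι)
    (ψ := LinearMap.id) fun m v => ?_) x
  simp only [LinearMap.comp_apply, RTensor.evalPi_mk_tmul, RTensor.ofPi_apply,
    RTensor.mk_op_smul_tmul, LinearMap.id_apply]
  have hsingle : ∀ j, v j • Pi.single j (1 : R) = Pi.single j (v j) := fun j => by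
    rw [← Pi.single_smul, smul_eq_mul, mul_one]
  simp_rw [hsingle, ← Submodule.mkQ_apply, ← map_sum, ← TensorProduct.tmul_sum,
    Finset.univ_sum_single]

lemma RTensor.evalPi_rtMapLeft (f : X →ₗ[Rᵐᵒᵖ] X') (x : RTensor R X (ι → R)) :
    RTensor.evalPi R X' ι (rtMapLeft R f x) = f ∘ RTensor.evalPi R X ι x := by
  refine LinearMap.congr_fun (RTensor.hom_ext (φ := RTensor.evalPi R X' ι ∘ₗ rtMapLeft R f)
    (ψ := f.toAddMonoidHom.toIntLinearMap.compLeft ι ∘ₗ RTensor.evalPi R X ι) fun m v => ?_) x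
  ext j
  simp

lemma rtMapLeft_ofPi [Fintype ι] [DecidableEq ι] (f : X →ₗ[Rᵐᵒᵖ] X') (u : ι → X) :
    rtMapLeft R f (RTensor.ofPi R X ι u) = RTensor.ofPi R X' ι (f ∘ u) := by
  simp [RTensor.ofPi_apply, map_sum]

end Pi

section Resolution

variable {W : ℤ → ModuleCat.{0} Rᵐᵒᵖ} {d : ∀ n : ℤ, W n ⟶ W (n + 1)}

lemma TensorExact.pi (hd : ∀ n, Function.Exact (d n) (d (n + 1))) (ι : Type) [Fintype ι]
    [DecidableEq ι] : TensorExact W d (ι → R) := by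
  refine .of_ker_subset_range hd fun n y hy => ?_
  have hcoord : ∀ j, (d (n + 1)) (RTensor.evalPi R (W (n + 1)) ι y j) = 0 := fun j => by
    simpa [hy] using (congr_fun (RTensor.evalPi_rtMapLeft (d (n + 1)).hom y) j).symm
  choose u hu using fun j => (hd n _).mp (hcoord j)
  refine ⟨RTensor.ofPi R (W n) ι u, ?_⟩
  rw [rtMapLeft_ofPi, show (d n).hom ∘ u = RTensor.evalPi R (W (n + 1)) ι y from funext hu,
    RTensor.ofPi_evalPi]

lemma TensorExact.of_finite_of_projective (hd : ∀ n, Function.Exact (d n) (d (n + 1)))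
    (P : Type) [AddCommGroup P] [Module R P] [Module.Finite R P] [Module.Projective R P] :
    TensorExact W d P := by
  obtain ⟨k, f, g, -, -, hfg⟩ := Module.Finite.exists_comp_eq_id_of_projective R P
  exact .of_retract hd g f hfg (.pi hd (Fin k))

/-- Since each `W n` is flat, `0 → W ⊗ K → W ⊗ P → W ⊗ N → 0` is a short exact sequence of
complexes, and exactness passes from the first two to the third by a diagram chase. -/
lemma TensorExact.of_shortExact (hflat : ∀ n, IsFlatRight R (W n))
    (hd : ∀ n, Function.Exact (d n) (d (n + 1))) {K P N : ModuleCat.{0} R} (i : K ⟶ P)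
    (p : P ⟶ N) (hi : Function.Injective i) (hp : Function.Surjective p)
    (hip : Function.Exact i p) (hK : TensorExact W d K) (hP : TensorExact W d P) :
    TensorExact W d N := by
  have hip' : Function.Exact i.hom p.hom := hip
  refine .of_ker_subset_range hd fun n y hy => ?_
  obtain ⟨x, rfl⟩ := rtMapRight_surjective (X := W (n + 1)) hp y
  obtain ⟨k, hk⟩ := (rtMapRight_exact (X := W (n + 1 + 1)) hp hip' _).mp
    (by rwa [← rtMapLeft_rtMapRight (d (n + 1)).hom p.hom x])
  have hdk : rtMapLeft R (N := K) (d (n + 1 + 1)).hom k = 0 := by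
    refine hflat _ K P i hi ?_
    rw [map_zero, ← rtMapLeft_rtMapRight, hk]
    exact LinearMap.congr_fun (rtMapLeft_comp_rtMapLeft_eq_zero hd (n + 1)) x
  obtain ⟨k', hk'⟩ := (hK (n + 1) k).mp hdk
  obtain ⟨z, hz⟩ := (hP n (x - rtMapRight R i.hom k')).mp
    (by rw [map_sub, rtMapLeft_rtMapRight, hk', hk, sub_self])
  refine ⟨rtMapRight R p.hom z, ?_⟩
  rw [rtMapLeft_rtMapRight, hz, map_sub, (rtMapRight_exact hp hip').apply_apply_eq_zero, sub_zero]

lemma TensorExact.of_isSFPOfFinitePd (hflat : ∀ n, IsFlatRight R (W n))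
    (hd : ∀ n, Function.Exact (d n) (d (n + 1))) {N : ModuleCat.{0} R}
    (hN : IsSFPOfFinitePd R N) : TensorExact W d N := by
  obtain ⟨n, F, δ, ε, hfin, hproj, hε, hexact₀, hexact, hvanish⟩ := hN
  induction n generalizing N F δ ε with
  | zero =>
    have : Subsingleton (F 1) := hvanish 1 one_pos
    have hinj : Function.Injective ε.hom :=
      (LinearMap.injective_iff_eq_zero_of_exact (f := (δ 0).hom) hexact₀).mpr
        (Subsingleton.elim _ _)
    let e := LinearEquiv.ofBijective ε.hom ⟨hinj, hε⟩
    exact .of_retract hd e.symm.toLinearMap ε.hom (LinearMap.ext e.apply_symm_apply)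
      (.of_finite_of_projective hd (F 0))
  | succ n ih =>
    let K := LinearMap.range (δ 0).hom
    have hK : TensorExact W d K :=
      ih (F := fun k => F (k + 1)) (δ := fun k => δ (k + 1))
        (ε := ModuleCat.ofHom (δ 0).hom.rangeRestrict) (fun _ => hfin _) (fun _ => hproj _)
        (δ 0).hom.surjective_rangeRestrict
        (fun x => Subtype.ext_iff.trans (hexact 0 x)) (fun _ => hexact _)
        (fun k hk => hvanish (k + 1) (by omega))
    have hKε : Function.Exact (ModuleCat.ofHom K.subtype : ModuleCat.of R K ⟶ F 0) ε :=
      fun y => (hexact₀ y).trans (by simp [K])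
    exact .of_shortExact hflat hd _ ε K.injective_subtype hε hKε hK
      (.of_finite_of_projective hd (F 0))

end Resolution

lemma IsFlatRight.isWeakFlat {X : ModuleCat.{0} Rᵐᵒᵖ} (hX : IsFlatRight R X) : IsWeakFlat R X :=
  fun _ _ K P i _ _ hi _ _ => hX K P i hi

/-- Every Gorenstein flat right `R`-module is Gorenstein weak flat. -/
theorem stmt10 (M : ModuleCat.{0} Rᵐᵒᵖ) (hM : IsGorensteinFlat R M) :
    IsGorensteinWeakFlat R M := by
  obtain ⟨W, d, π, ι, hflat, hd, hπ, hι, hπι, hexact, -⟩ := hM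
  exact ⟨W, d, π, ι, fun n => (hflat n).isWeakFlat, hd, hπ, hι, hπι, hexact,
    fun _ hN => TensorExact.of_isSFPOfFinitePd hflat hd hN⟩
end
end

section
/- Every Gorenstein weak injective R-module is weak injective if and only if for every R-module M, the Gorenstein weak injective dimension of M equals its weak injective dimension. -/
open CategoryTheory Opposite

noncomputable section

variable (R : Type) [Ring R]

/-- `M` has weak injective dimension at most `n`: there is an exact sequence
`0 → M → G⁰ → ⋯ → Gⁿ → 0` with each `Gⁱ` weak injective. -/
def WidLE (M : ModuleCat.{0} R) (n : ℕ) : Prop :=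
  ∃ (G : ℕ → ModuleCat.{0} R) (d : ∀ k, G k ⟶ G (k + 1)) (ι : M ⟶ G 0),
    (∀ k, IsWeakInjective R (G k)) ∧
    Function.Injective ι ∧ Function.Exact ι (d 0) ∧
    (∀ k, Function.Exact (d k) (d (k + 1))) ∧
    ∀ k, n < k → Subsingleton (G k)

/-- `M` has Gorenstein weak injective dimension at most `n`. -/
def GwidLE (M : ModuleCat.{0} R) (n : ℕ) : Prop :=
  ∃ (G : ℕ → ModuleCat.{0} R) (d : ∀ k, G k ⟶ G (k + 1)) (ι : M ⟶ G 0),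
    (∀ k, IsGorensteinWeakInjective R (G k)) ∧
    Function.Injective ι ∧ Function.Exact ι (d 0) ∧
    (∀ k, Function.Exact (d k) (d (k + 1))) ∧
    ∀ k, n < k → Subsingleton (G k)

/-- The weak injective dimension of `M`. -/
def wid (M : ModuleCat.{0} R) : ℕ∞ :=
  sInf {c : ℕ∞ | ∃ n : ℕ, c = n ∧ WidLE R M n}

/-- The Gorenstein weak injective dimension of `M`. -/
def Gwid (M : ModuleCat.{0} R) : ℕ∞ :=
  sInf {c : ℕ∞ | ∃ n : ℕ, c = n ∧ GwidLE R M n}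

/-!
A weak injective module `M` is Gorenstein weak injective, witnessed by the split complete
resolution `⋯ → M → M → M → ⋯` whose maps alternate between `𝟙 M` and `0`. So if conversely
every Gorenstein weak injective module is weak injective, the two classes coincide, and with
them the two dimensions. If instead the dimensions always agree, a Gorenstein weak injective `M`
has `Gwid M = 0`, hence `wid M = 0`; as `ℕ∞` is well ordered this infimum is attained, and a
weak injective coresolution `0 → M → G⁰ → 0` identifies `M` with the weak injective `G⁰`.
-/

universe v

open Limits

namespace ModuleCat

variable {R}

lemma exact_id_zero (M N : ModuleCat.{v} R) : Function.Exact (𝟙 M) (0 : M ⟶ N) :=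
  fun y => iff_of_true rfl ⟨y, rfl⟩

lemma exact_zero_id (M N : ModuleCat.{v} R) : Function.Exact (0 : N ⟶ M) (𝟙 M) := by
  simpa using
    (LinearMap.exact_zero_iff_injective N (LinearMap.id : M →ₗ[R] M)).2 Function.injective_id

lemma exact_of_subsingleton_middle {M N P : ModuleCat.{v} R} [Subsingleton N]
    (f : M ⟶ N) (g : N ⟶ P) : Function.Exact f g :=
  fun y => iff_of_true (by rw [Subsingleton.elim y 0, map_zero]) ⟨0, Subsingleton.elim _ _⟩

end ModuleCat

lemma isZero_Ext_of_isZero (S : Type*) [Ring S] {C : Type*} [Category C] [Abelian C] [Linear S C]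
    [EnoughProjectives C] (X : C) {Y : C} (hY : IsZero Y) (n : ℕ) :
    IsZero (((Ext S C n).obj (op X)).obj Y) := by
  refine IsZero.of_iso (ShortComplex.isZero_homology_of_isZero_X₂ _ ?_)
    ((ProjectiveResolution.of X).isoExt n Y)
  have : Subsingleton ((ProjectiveResolution.of X).complex.X n ⟶ Y) :=
    ⟨fun _ _ => hY.eq_of_tgt _ _⟩
  exact ModuleCat.isZero_of_subsingleton (ModuleCat.of S _)

section Coresolution

variable {R}

def HasCoresolutionLE (P : ObjectProperty (ModuleCat.{v} R)) (M : ModuleCat.{v} R) (n : ℕ) :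
    Prop :=
  ∃ (G : ℕ → ModuleCat.{v} R) (d : ∀ k, G k ⟶ G (k + 1)) (ι : M ⟶ G 0),
    (∀ k, P (G k)) ∧
    Function.Injective ι ∧ Function.Exact ι (d 0) ∧
    (∀ k, Function.Exact (d k) (d (k + 1))) ∧
    ∀ k, n < k → Subsingleton (G k)

def coresolutionDim (P : ObjectProperty (ModuleCat.{v} R)) (M : ModuleCat.{v} R) : ℕ∞ :=
  sInf {c : ℕ∞ | ∃ n : ℕ, c = n ∧ HasCoresolutionLE P M n}

variable {P : ObjectProperty (ModuleCat.{v} R)} {M : ModuleCat.{v} R}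

lemma HasCoresolutionLE.mono {m n : ℕ} (h : HasCoresolutionLE P M m) (hmn : m ≤ n) :
    HasCoresolutionLE P M n := by
  obtain ⟨G, d, ι, hP, hι, hι₀, hd, hG⟩ := h
  exact ⟨G, d, ι, hP, hι, hι₀, hd, fun k hk => hG k (hmn.trans_lt hk)⟩

lemma coresolutionDim_le_iff (n : ℕ) : coresolutionDim P M ≤ n ↔ HasCoresolutionLE P M n := by
  refine ⟨fun h => ?_, fun h => sInf_le ⟨n, rfl, h⟩⟩
  have hne : {c : ℕ∞ | ∃ n : ℕ, c = n ∧ HasCoresolutionLE P M n}.Nonempty := by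
    by_contra hemp
    rw [Set.not_nonempty_iff_eq_empty] at hemp
    simp [coresolutionDim, hemp] at h
  obtain ⟨m, hm, hres⟩ := csInf_mem hne
  rw [coresolutionDim, hm, Nat.cast_le] at h
  exact hres.mono h

lemma hasCoresolutionLE_zero (hM : P M) (h0 : P (ModuleCat.of R PUnit)) :
    HasCoresolutionLE P M 0 := by
  exact ⟨fun | 0 => M | _ + 1 => ModuleCat.of R PUnit, fun _ => 0, 𝟙 M,
    fun | 0 => hM | _ + 1 => h0, fun _ _ => id, ModuleCat.exact_id_zero _ _,
    fun _ => ModuleCat.exact_of_subsingleton_middle _ _,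
    fun | _ + 1, _ => inferInstanceAs (Subsingleton PUnit)⟩

lemma HasCoresolutionLE.prop_of_zero [P.IsClosedUnderIsomorphisms]
    (h : HasCoresolutionLE P M 0) : P M := by
  obtain ⟨G, _, ι, hP, hι, hι₀, -, hG⟩ := h
  have : Subsingleton (G 1) := hG 1 zero_lt_one
  have hsurj : Function.Surjective ι := fun y => (hι₀ y).1 (Subsingleton.elim _ _)
  exact P.prop_of_iso (LinearEquiv.ofBijective ι.hom ⟨hι, hsurj⟩).toModuleIso.symm (hP 0)

end Coresolution

section WeakInjective

variable {R}

instance : ObjectProperty.IsClosedUnderIsomorphisms (IsWeakInjective R) where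
  of_iso e h N hN :=
    (((Ext ℤ (ModuleCat.{0} R) 1).obj (op N)).mapIso e).toLinearEquiv.toEquiv.subsingleton_congr.1
      (h N hN)

lemma isWeakInjective_of_subsingleton (M : ModuleCat.{0} R) [Subsingleton M] :
    IsWeakInjective R M := fun N _ =>
  ModuleCat.subsingleton_of_isZero
    (isZero_Ext_of_isZero ℤ N (ModuleCat.isZero_of_subsingleton M) 1)

lemma IsWeakInjective.isGorensteinWeakInjective {M : ModuleCat.{0} R}
    (hM : IsWeakInjective R M) : IsGorensteinWeakInjective R M := by
  let d : ∀ n : ℤ, M ⟶ M := fun n => if Even n then 𝟙 M else 0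
  have hd : ∀ n, d n = 𝟙 M ∧ d (n + 1) = 0 ∨ d n = 0 ∧ d (n + 1) = 𝟙 M := fun n => by
    by_cases hn : Even n
    · exact Or.inl ⟨if_pos hn, if_neg (by rwa [Int.even_add_one, not_not])⟩
    · exact Or.inr ⟨if_neg hn, if_pos (Int.even_add_one.2 hn)⟩
  refine ⟨fun _ => M, d, 𝟙 M, 𝟙 M, fun _ => hM, fun n => ?_, Function.surjective_id,
    Function.injective_id, (Category.id_comp _).trans (if_pos Even.zero).symm, ?_,
    fun N _ n g hg => ?_⟩
  · rcases hd n with ⟨h₀, h₁⟩ | ⟨h₀, h₁⟩ <;> rw [h₀, h₁]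
    exacts [ModuleCat.exact_id_zero M M, ModuleCat.exact_zero_id M M]
  · simpa [d] using ModuleCat.exact_zero_id M M
  · rcases hd n with ⟨h₀, -⟩ | ⟨h₀, h₁⟩
    · exact ⟨g, by rw [h₀, Category.comp_id]⟩
    · rw [h₁, Category.comp_id] at hg
      exact ⟨0, by rw [hg, zero_comp]⟩

lemma wid_eq_coresolutionDim (M : ModuleCat.{0} R) :
    wid R M = coresolutionDim (IsWeakInjective R) M := rfl

lemma Gwid_eq_coresolutionDim (M : ModuleCat.{0} R) :
    Gwid R M = coresolutionDim (IsGorensteinWeakInjective R) M := rfl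

end WeakInjective

/-- Every Gorenstein weak injective `R`-module is weak injective iff for every `R`-module
`M` the Gorenstein weak injective dimension of `M` equals its weak injective dimension. -/
theorem stmt17 :
    (∀ M : ModuleCat.{0} R, IsGorensteinWeakInjective R M → IsWeakInjective R M) ↔
      (∀ M : ModuleCat.{0} R, Gwid R M = wid R M) := by
  constructor
  · intro h M
    have hP : IsGorensteinWeakInjective R = IsWeakInjective R :=
      funext fun X => propext ⟨h X, IsWeakInjective.isGorensteinWeakInjective⟩
    rw [wid_eq_coresolutionDim, Gwid_eq_coresolutionDim, hP]
  · intro h M hM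
    have hPUnit :=
      (isWeakInjective_of_subsingleton (ModuleCat.of R PUnit)).isGorensteinWeakInjective
    have hM₀ := (coresolutionDim_le_iff 0).2 (hasCoresolutionLE_zero hM hPUnit)
    rw [← Gwid_eq_coresolutionDim, h, wid_eq_coresolutionDim, coresolutionDim_le_iff] at hM₀
    exact hM₀.prop_of_zero
end
end
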